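/- arXiv:1605.01677 — 3 statements merged into one kernel-verified Lean document; each statement's English description precedes it below -/
import Mathlib

section
/- Let 0 < μ₂ < μ < 1 and set C₁(μ, μ₂) = (μ − μ₂)²/(2μ(1 − μ₂)). Then for any μ₃ with 0 ≤ μ₃ ≤ μ₂, the Bernoulli KL divergence satisfies d(μ₃, μ) − d(μ₃, μ₂) ≥ C₁(μ, μ₂) > 0. -/
/-!
For fixed `μ₂ < μ`, the map `p ↦ d(p, μ) − d(p, μ₂)` is affine with non-positive slope
`log (μ₂/μ) − log ((1 − μ₂)/(1 − μ))`, so on `p ≤ μ₂` it is at least its value `d(μ₂, μ)` at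
`p = μ₂`. The two summands of `d(μ₂, μ)` are bounded below by `log x ≥ (x − x⁻¹)/2` on `(0, 1]`
and `−log (1 − t) ≥ t + t²/2` on `[0, 1)`, giving
`d(μ₂, μ) ≥ (μ − μ₂)²/(2μ) + (μ − μ₂)²/(2(1 − μ₂)) ≥ C₁(μ, μ₂)`.
-/

open Real

noncomputable def klBer (p q : ℝ) : ℝ :=
  p * Real.log (p / q) + (1 - p) * Real.log ((1 - p) / (1 - q))

namespace Real

theorem sub_inv_div_two_le_log {x : ℝ} (hx₀ : 0 < x) (hx₁ : x ≤ 1) : (x - x⁻¹) / 2 ≤ log x := by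
  rw [← sinh_log hx₀]
  exact sinh_le_self_iff.mpr (log_nonpos hx₀.le hx₁)

theorem add_sq_div_two_le_neg_log_one_sub {t : ℝ} (ht₀ : 0 ≤ t) (ht₁ : t < 1) :
    t + t ^ 2 / 2 ≤ -log (1 - t) := by
  have hsum := hasSum_pow_div_log_of_abs_lt_one (abs_lt.mpr ⟨by linarith, ht₁⟩)
  have := sum_le_hasSum (Finset.range 2) (fun n _ => by positivity) hsum
  norm_num [Finset.sum_range_succ] at this
  linarith

theorem mul_log_div_sub_mul_log_div (p : ℝ) {q r : ℝ} (hq : q ≠ 0) (hr : r ≠ 0) :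
    p * log (p / q) - p * log (p / r) = p * log (r / q) := by
  rcases eq_or_ne p 0 with rfl | hp
  · simp
  rw [← mul_sub, ← log_div (by positivity) (by positivity)]
  congr 2
  field_simp

end Real

theorem klBer_self (p : ℝ) : klBer p p = 0 := by
  by_cases hp : p = 0 <;> by_cases hp' : 1 - p = 0 <;> simp [klBer, hp, hp', div_self]

theorem klBer_sub_klBer (p : ℝ) {q r : ℝ} (hq₀ : q ≠ 0) (hr₀ : r ≠ 0) (hq₁ : q ≠ 1)
    (hr₁ : r ≠ 1) :
    klBer p q - klBer p r = p * log (r / q) + (1 - p) * log ((1 - r) / (1 - q)) := by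
  have h₀ := mul_log_div_sub_mul_log_div p hq₀ hr₀
  have h₁ := mul_log_div_sub_mul_log_div (1 - p) (sub_ne_zero.mpr hq₁.symm)
    (sub_ne_zero.mpr hr₁.symm)
  simp only [klBer]
  linarith

theorem antitone_klBer_sub_klBer {q r : ℝ} (hr₀ : 0 < r) (hrq : r ≤ q) (hq₁ : q < 1) :
    Antitone fun p => klBer p q - klBer p r := by
  intro a b hab
  have hq₀ : 0 < q := hr₀.trans_le hrq
  have hlog₀ : log (r / q) ≤ 0 := log_nonpos (by positivity) ((div_le_one hq₀).mpr hrq)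
  have hlog₁ : 0 ≤ log ((1 - r) / (1 - q)) :=
    log_nonneg ((one_le_div (by linarith)).mpr (by linarith))
  dsimp only
  rw [klBer_sub_klBer _ hq₀.ne' hr₀.ne' hq₁.ne (by linarith),
    klBer_sub_klBer _ hq₀.ne' hr₀.ne' hq₁.ne (by linarith)]
  nlinarith [mul_nonneg (sub_nonneg.mpr hab) (sub_nonneg.mpr (hlog₀.trans hlog₁))]

theorem sq_sub_div_le_mul_log_div {p q : ℝ} (hp : 0 < p) (hpq : p ≤ q) :
    (p ^ 2 - q ^ 2) / (2 * q) ≤ p * log (p / q) := by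
  have hq : 0 < q := hp.trans_le hpq
  have hlog := sub_inv_div_two_le_log (div_pos hp hq) ((div_le_one hq).mpr hpq)
  calc (p ^ 2 - q ^ 2) / (2 * q) = p * ((p / q - (p / q)⁻¹) / 2) := by field_simp
    _ ≤ p * log (p / q) := by gcongr

theorem sub_add_sq_div_le_mul_log_div {p q : ℝ} (hpq : p ≤ q) (hq : q < 1) :
    (q - p) + (q - p) ^ 2 / (2 * (1 - p)) ≤ (1 - p) * log ((1 - p) / (1 - q)) := by
  have hp : 0 < 1 - p := by linarith
  set t := (q - p) / (1 - p)
  have hlog := add_sq_div_two_le_neg_log_one_sub (t := t) (by positivity)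
    ((div_lt_one hp).mpr (by linarith))
  have h1t : 1 - t = ((1 - p) / (1 - q))⁻¹ := by
    simp only [t]
    field_simp
    ring
  rw [h1t, log_inv, neg_neg] at hlog
  calc (q - p) + (q - p) ^ 2 / (2 * (1 - p)) = (1 - p) * (t + t ^ 2 / 2) := by
        simp only [t]; field_simp
    _ ≤ (1 - p) * log ((1 - p) / (1 - q)) := by gcongr

theorem sq_sub_div_add_sq_sub_div_le_klBer {p q : ℝ} (hp : 0 < p) (hpq : p ≤ q) (hq : q < 1) :
    (q - p) ^ 2 / (2 * q) + (q - p) ^ 2 / (2 * (1 - p)) ≤ klBer p q := by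
  have h₀ := sq_sub_div_le_mul_log_div hp hpq
  have h₁ := sub_add_sq_div_le_mul_log_div hpq hq
  have hq₀ : 0 < q := hp.trans_le hpq
  have : (q - p) ^ 2 / (2 * q) = (p ^ 2 - q ^ 2) / (2 * q) + (q - p) := by
    field_simp
    ring
  rw [klBer]
  linarith

theorem sq_sub_div_le_klBer {p q : ℝ} (hp : 0 < p) (hpq : p ≤ q) (hq : q < 1) :
    (q - p) ^ 2 / (2 * q * (1 - p)) ≤ klBer p q := by
  have hq₀ : 0 < q := hp.trans_le hpq
  have hp₁ : 0 < 1 - p := by linarith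
  refine le_trans ?_ (sq_sub_div_add_sq_sub_div_le_klBer hp hpq hq)
  rw [div_add_div _ _ (by positivity) (by positivity),
    div_le_div_iff₀ (by positivity) (by positivity)]
  nlinarith [mul_nonneg (mul_nonneg (mul_nonneg hq₀.le hp₁.le) (sq_nonneg (q - p)))
    (sub_nonneg.mpr hpq)]

theorem klBer_diff_ge_general (μ μ₂ μ₃ : ℝ) (h0 : 0 < μ₂) (h12 : μ₂ < μ) (h1 : μ < 1)
    (h32 : μ₃ ≤ μ₂) :
    (μ - μ₂) ^ 2 / (2 * μ * (1 - μ₂)) ≤ klBer μ₃ μ - klBer μ₃ μ₂ ∧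
      0 < (μ - μ₂) ^ 2 / (2 * μ * (1 - μ₂)) := by
  have hμ : 0 < μ := h0.trans h12
  have hμ₂ : 0 < 1 - μ₂ := by linarith
  refine ⟨?_, by have := sub_pos.mpr h12; positivity⟩
  calc (μ - μ₂) ^ 2 / (2 * μ * (1 - μ₂)) ≤ klBer μ₂ μ := sq_sub_div_le_klBer h0 h12.le h1
    _ = klBer μ₂ μ - klBer μ₂ μ₂ := by rw [klBer_self, sub_zero]
    _ ≤ klBer μ₃ μ - klBer μ₃ μ₂ := antitone_klBer_sub_klBer h0 h12.le h1 h32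

/-- Lemma 13 of Honda–Takemura: for `0 < μ₂ < μ < 1` and any `μ₃ ≤ μ₂`,
`d(μ₃, μ) − d(μ₃, μ₂) ≥ C₁(μ, μ₂) > 0` where
`C₁(μ, μ₂) = (μ − μ₂)² / (2 μ (1 − μ₂))`. -/
theorem klBer_diff_ge (μ μ₂ μ₃ : ℝ) (h0 : 0 < μ₂) (h12 : μ₂ < μ) (h1 : μ < 1)
    (h30 : 0 ≤ μ₃) (h32 : μ₃ ≤ μ₂) :
    (μ - μ₂) ^ 2 / (2 * μ * (1 - μ₂)) ≤ klBer μ₃ μ - klBer μ₃ μ₂ ∧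
      0 < (μ - μ₂) ^ 2 / (2 * μ * (1 - μ₂)) :=
  klBer_diff_ge_general μ μ₂ μ₃ h0 h12 h1 h32
end

section
/- Consider the linear program: minimize ∑_{j=1}^{n} c_j y_j over y ∈ [0,∞)ⁿ subject to ∑_{j ∈ S} y_j ≥ 1 for every S ⊆ {1,…,n} with |S| = n − k, where 0 < k < n and the costs satisfy 0 ≤ c₁ ≤ c₂ ≤ ⋯ ≤ c_n. Then there exists an integer h with k < h ≤ n such that the vector y* defined by y*_j = 1/(h − k) for j ≤ h and y*_j = 0 for j > h is an optimal solution, i.e., it is feasible and achieves the infimum of the objective over the feasible set. -/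
/-!
Let `C h = c₀ + ⋯ + c_{h-1}` and let `h` minimise `m = C h / (h - k)` over `k < h ≤ n`; the
block vector costs exactly `m`. A feasible `y` can be sorted into nonincreasing order without
increasing its cost (rearrangement inequality), and then its `n - k` smallest entries, the tail
`j ≥ k`, carry mass at least `1`. By Abel summation a nonincreasing nonnegative `w` is a
nonnegative combination of the prefix indicators `1_{[0,h)}`, and for each of them
`C h ≥ m (h - k)⁺` compares cost with tail mass; hence `∑ c w ≥ m ∑_{j ≥ k} w_j ≥ m`.
-/

open Finset

theorem sum_range_mul_le_sum_range_mul_of_antitone {g w : ℕ → ℝ} (hw : Antitone w) (n : ℕ)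
    (hg : ∀ h ≤ n, 0 ≤ ∑ i ∈ range h, g i) :
    (∑ i ∈ range n, g i) * w n ≤ ∑ i ∈ range n, g i * w i := by
  induction n with
  | zero => simp
  | succ n ih =>
    calc (∑ i ∈ range (n + 1), g i) * w (n + 1)
        ≤ (∑ i ∈ range (n + 1), g i) * w n :=
          mul_le_mul_of_nonneg_left (hw n.le_succ) (hg _ le_rfl)
      _ = (∑ i ∈ range n, g i) * w n + g n * w n := by rw [sum_range_succ, add_mul]
      _ ≤ ∑ i ∈ range (n + 1), g i * w i := by
          rw [sum_range_succ]
          gcongr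
          exact ih fun h hh => hg h (hh.trans n.le_succ)

theorem exists_perm_comp_antitone {α : Type*} [LinearOrder α] {n : ℕ} (f : Fin n → α) :
    ∃ σ : Equiv.Perm (Fin n), Antitone (f ∘ σ) :=
  ⟨Fin.revPerm.trans (Tuple.sort f), (Tuple.monotone_sort f).comp_antitone Fin.rev_anti⟩

section PrefixSum

variable {n : ℕ}

theorem map_valEmbedding_filter_mem {s : Finset ℕ} (hs : ∀ i ∈ s, i < n) :
    (univ.filter fun j : Fin n => (j : ℕ) ∈ s).map Fin.valEmbedding = s := by
  ext i
  simp only [mem_map, mem_filter, mem_univ, true_and, Fin.valEmbedding_apply]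
  exact ⟨by rintro ⟨j, hj, rfl⟩; exact hj, fun hi => ⟨⟨i, hs i hi⟩, hi, rfl⟩⟩

theorem card_filter_val_mem_Ico {a b : ℕ} (hb : b ≤ n) :
    #(univ.filter fun j : Fin n => (j : ℕ) ∈ Ico a b) = b - a := by
  rw [← card_map Fin.valEmbedding, map_valEmbedding_filter_mem, Nat.card_Ico]
  intro i hi
  exact (mem_Ico.mp hi).2.trans_le hb

theorem card_filter_le_val {k : ℕ} :
    #(univ.filter fun j : Fin n => k ≤ (j : ℕ)) = n - k := by
  rw [← card_filter_val_mem_Ico le_rfl]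
  congr 1
  exact filter_congr fun j _ => by simp [j.isLt]

theorem card_le_card_filter_val_lt_add (S : Finset (Fin n)) {h : ℕ} :
    #S ≤ #(S.filter fun j : Fin n => (j : ℕ) < h) + (n - h) := by
  rw [← card_filter_add_card_filter_not (fun j : Fin n => (j : ℕ) < h),
    ← card_filter_le_val]
  gcongr
  exact fun j hj => by simp_all

def prefixSum (f : Fin n → ℝ) (h : ℕ) : ℝ :=
  ∑ j ∈ univ.filter (fun j : Fin n => (j : ℕ) < h), f j

theorem prefixSum_nonneg {f : Fin n → ℝ} (hf : 0 ≤ f) (h : ℕ) : 0 ≤ prefixSum f h :=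
  sum_nonneg fun j _ => hf j

theorem prefixSum_sub (f g : Fin n → ℝ) (h : ℕ) :
    prefixSum (f - g) h = prefixSum f h - prefixSum g h :=
  sum_sub_distrib ..

theorem prefixSum_indicator_le_val (k : ℕ) (m : ℝ) {h : ℕ} (hh : h ≤ n) :
    prefixSum (fun j : Fin n => if k ≤ (j : ℕ) then m else 0) h = (h - k : ℕ) * m := by
  rw [prefixSum, sum_ite, sum_const_zero, add_zero, sum_const, nsmul_eq_mul, filter_filter,
    ← card_filter_val_mem_Ico hh]
  congr 3
  ext j
  simp only [mem_filter, mem_univ, true_and, mem_Ico]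
  tauto

theorem sum_mul_ite_val_lt (c : Fin n → ℝ) (h : ℕ) (a : ℝ) :
    ∑ j, c j * (if (j : ℕ) < h then a else 0) = prefixSum c h * a := by
  simp only [mul_ite, mul_zero, ← sum_filter, prefixSum, sum_mul]

theorem extend_val_apply (f : Fin n → ℝ) (i : ℕ) :
    Function.extend Fin.val f 0 i = if hi : i < n then f ⟨i, hi⟩ else 0 := by
  split_ifs with hi
  · exact Fin.val_injective.extend_apply f 0 ⟨i, hi⟩
  · exact Function.extend_apply' _ _ _ fun ⟨j, hj⟩ => hi (hj ▸ j.isLt)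

theorem prefixSum_eq_sum_range_extend (f : Fin n → ℝ) {h : ℕ} (hh : h ≤ n) :
    prefixSum f h = ∑ i ∈ range h, Function.extend Fin.val f 0 i := by
  rw [← map_valEmbedding_filter_mem fun i hi => (mem_range.mp hi).trans_le hh, sum_map]
  simp [prefixSum, Fin.val_injective.extend_apply]

theorem sum_mul_nonneg_of_antitone {g w : Fin n → ℝ} (hw : Antitone w) (hw0 : 0 ≤ w)
    (hg : ∀ h ≤ n, 0 ≤ prefixSum g h) : 0 ≤ ∑ j, g j * w j := by
  set G := Function.extend Fin.val g 0
  set W := Function.extend Fin.val w 0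
  have hW : Antitone W := by
    intro a b hab
    simp only [W, extend_val_apply]
    split_ifs with hb ha ha
    · exact hw (Fin.mk_le_mk.mpr hab)
    · omega
    · exact hw0 _
    · exact le_rfl
  have habel := sum_range_mul_le_sum_range_mul_of_antitone hW n fun h hh => by
    rw [← prefixSum_eq_sum_range_extend g hh]; exact hg h hh
  rw [show W n = 0 by simp [W, extend_val_apply], mul_zero] at habel
  convert habel using 1
  rw [← Fin.sum_univ_eq_sum_range (fun i => G i * W i)]
  simp [G, W, extend_val_apply]

theorem mul_sum_filter_le_val_le_sum_mul {c w : Fin n → ℝ} {k : ℕ} {m : ℝ} (hc0 : 0 ≤ c)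
    (hw : Antitone w) (hw0 : 0 ≤ w)
    (hm : ∀ h, k < h → h ≤ n → m * (h - k) ≤ prefixSum c h) :
    m * ∑ j ∈ univ.filter (fun j : Fin n => k ≤ (j : ℕ)), w j ≤ ∑ j, c j * w j := by
  -- `c - m • 1_{j ≥ k}` has prefix sums `C h - m (h - k)⁺ ≥ 0`; apply Abel's inequality.
  set d : Fin n → ℝ := fun j => if k ≤ (j : ℕ) then m else 0
  have hcd : ∀ h ≤ n, 0 ≤ prefixSum (c - d) h := by
    intro h hh
    rw [prefixSum_sub, prefixSum_indicator_le_val k m hh]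
    rcases le_or_gt h k with hhk | hkh
    · rw [Nat.sub_eq_zero_of_le hhk, Nat.cast_zero, zero_mul, sub_zero]
      exact prefixSum_nonneg hc0 h
    · rw [Nat.cast_sub hkh.le, mul_comm]
      linarith [hm h hkh hh]
  have := sum_mul_nonneg_of_antitone hw hw0 hcd
  rw [mul_sum, sum_filter]
  simp only [Pi.sub_apply, sub_mul, sum_sub_distrib, d, ite_mul, zero_mul] at this
  linarith

theorem le_sum_mul_of_feasible {c y : Fin n → ℝ} {k : ℕ} {m : ℝ} (hc0 : 0 ≤ c)
    (hc : Monotone c) (hy0 : 0 ≤ y)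
    (hy : ∀ S : Finset (Fin n), #S = n - k → 1 ≤ ∑ j ∈ S, y j) (hm0 : 0 ≤ m)
    (hm : ∀ h, k < h → h ≤ n → m * (h - k) ≤ prefixSum c h) :
    m ≤ ∑ j, c j * y j := by
  obtain ⟨σ, hσ⟩ := exists_perm_comp_antitone y
  set tail := univ.filter fun j : Fin n => k ≤ (j : ℕ)
  have htail : 1 ≤ ∑ j ∈ tail, y (σ j) := by
    have hcard : #(tail.map σ.toEmbedding) = n - k := by rw [card_map, card_filter_le_val]
    simpa only [sum_map, Equiv.coe_toEmbedding] using hy _ hcard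
  calc m ≤ m * ∑ j ∈ tail, y (σ j) := le_mul_of_one_le_right hm0 htail
    _ ≤ ∑ j, c j * y (σ j) :=
      mul_sum_filter_le_val_le_sum_mul hc0 hσ (fun j => hy0 (σ j)) hm
    _ ≤ ∑ j, c j * y (σ (σ⁻¹ j)) := (hc.antivary hσ).sum_mul_le_sum_mul_comp_perm
    _ = ∑ j, c j * y j := by simp

end PrefixSum

theorem exists_block_optimal_solution_general (n k : ℕ) (hkn : k < n)
    (c : Fin n → ℝ) (hc0 : ∀ j, 0 ≤ c j) (hcmono : ∀ i j : Fin n, i ≤ j → c i ≤ c j) :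
    ∃ h : ℕ, k < h ∧ h ≤ n ∧
      (let ystar : Fin n → ℝ := fun j => if (j : ℕ) < h then 1 / (h - k : ℝ) else 0
       ((∀ j, 0 ≤ ystar j) ∧
        (∀ S : Finset (Fin n), S.card = n - k → 1 ≤ ∑ j ∈ S, ystar j)) ∧
       ∀ y : Fin n → ℝ, (∀ j, 0 ≤ y j) →
         (∀ S : Finset (Fin n), S.card = n - k → 1 ≤ ∑ j ∈ S, y j) →
         ∑ j, c j * ystar j ≤ ∑ j, c j * y j) := by
  obtain ⟨h, hh, hmin⟩ := exists_min_image (Ioc k n) (fun h => prefixSum c h / (h - k : ℝ))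
    ⟨n, mem_Ioc.mpr ⟨hkn, le_rfl⟩⟩
  obtain ⟨hkh, hhn⟩ := mem_Ioc.mp hh
  have hpos : (0 : ℝ) < h - k := sub_pos.mpr (by exact_mod_cast hkh)
  refine ⟨h, hkh, hhn, ⟨fun j => ?_, fun S hS => ?_⟩, fun y hy0 hy => ?_⟩ <;> dsimp only
  · split_ifs <;> positivity
  · rw [← sum_filter, sum_const, nsmul_eq_mul, mul_one_div, one_le_div hpos,
      ← Nat.cast_sub hkh.le]
    have := card_le_card_filter_val_lt_add S (h := h)
    exact_mod_cast (by omega : h - k ≤ #(S.filter fun j : Fin n => (j : ℕ) < h))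
  · rw [sum_mul_ite_val_lt, mul_one_div]
    refine le_sum_mul_of_feasible hc0 hcmono hy0 hy
      (div_nonneg (prefixSum_nonneg hc0 h) hpos.le) fun h' hkh' hh' => ?_
    rw [← le_div_iff₀ (sub_pos.mpr (by exact_mod_cast hkh'))]
    exact hmin h' (mem_Ioc.mpr ⟨hkh', hh'⟩)

/-- The subset-sum constrained LP `min ∑ c_j y_j` subject to
`∑_{j ∈ S} y_j ≥ 1` for all size-`(n−k)` subsets `S`, with nondecreasing
nonnegative costs, has an optimal solution of the form
`y* = (1/(h−k), …, 1/(h−k), 0, …, 0)` for some `k < h ≤ n`. -/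
theorem exists_block_optimal_solution (n k : ℕ) (hk0 : 0 < k) (hkn : k < n)
    (c : Fin n → ℝ) (hc0 : ∀ j, 0 ≤ c j) (hcmono : ∀ i j : Fin n, i ≤ j → c i ≤ c j) :
    ∃ h : ℕ, k < h ∧ h ≤ n ∧
      (let ystar : Fin n → ℝ := fun j => if (j : ℕ) < h then 1 / (h - k : ℝ) else 0
       ((∀ j, 0 ≤ ystar j) ∧
        (∀ S : Finset (Fin n), S.card = n - k → 1 ≤ ∑ j ∈ S, ystar j)) ∧
       ∀ y : Fin n → ℝ, (∀ j, 0 ≤ y j) →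
         (∀ S : Finset (Fin n), S.card = n - k → 1 ≤ ∑ j ∈ S, y j) →
         ∑ j, c j * ystar j ≤ ∑ j, c j * y j) :=
  exists_block_optimal_solution_general n k hkn c hc0 hcmono
end

section
/- Let X₁,…,Xₙ be i.i.d. Bernoulli(μ) random variables with μ ∈ (0,1), and let X̄ = (1/n)∑Xᵢ. Then for any ε > 0 with μ + ε ≤ 1, P(X̄ ≥ μ + ε) ≤ exp(−n·d(μ+ε, μ)), where d is the Bernoulli KL divergence. -/
/-!
Markov's inequality applied to `exp (t ∑ Xᵢ)` bounds the probability by `f(t)ⁿ`, where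
`f(t) = exp (-t a) · E[exp (t X₁)]` and `a = μ + ε`; independence makes the moment generating
function of the sum the `n`-th power of that of one trial. For `a < 1`, the minimiser
`t = log (a (1 - μ) / ((1 - a) μ))` gives `f(t) = exp (-klBer a μ)`; for `a = 1` the infimum
`μ = exp (-klBer 1 μ)` is only reached as `t → ∞`.
-/

open ProbabilityTheory MeasureTheory Real Filter Topology

noncomputable def bernoulliChernoffFactor (a μ t : ℝ) : ℝ :=
  exp (-t * a) * (1 + (exp t - 1) * μ)

lemma exp_mul_eq_indicator_add_one {Ω : Type*} {X : Ω → ℝ} (hX : ∀ ω, X ω = 0 ∨ X ω = 1)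
    (t : ℝ) :
    (fun ω => exp (t * X ω)) = fun ω => {ω | X ω = 1}.indicator (fun _ => exp t - 1) ω + 1 := by
  funext ω
  rcases hX ω with h | h <;> simp [h]

section Bernoulli

variable {Ω : Type*} [MeasurableSpace Ω] {P : Measure Ω}

lemma integrable_exp_mul_of_bernoulli [IsFiniteMeasure P] {X : Ω → ℝ} (hm : Measurable X)
    (hX : ∀ ω, X ω = 0 ∨ X ω = 1) (t : ℝ) : Integrable (fun ω => exp (t * X ω)) P := by
  rw [exp_mul_eq_indicator_add_one hX]
  exact ((integrable_const _).indicator (hm (measurableSet_singleton 1))).add (integrable_const 1)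

lemma mgf_of_bernoulli [IsProbabilityMeasure P] {X : Ω → ℝ} (hm : Measurable X)
    (hX : ∀ ω, X ω = 0 ∨ X ω = 1) (t : ℝ) :
    mgf X P t = 1 + (exp t - 1) * P.real {ω | X ω = 1} := by
  have hs : MeasurableSet {ω | X ω = 1} := hm (measurableSet_singleton 1)
  rw [mgf, exp_mul_eq_indicator_add_one hX,
    integral_add ((integrable_const _).indicator hs) (integrable_const 1),
    integral_indicator_const _ hs]
  simp only [integral_const, probReal_univ, smul_eq_mul]
  ring

lemma measureReal_sum_ge_le_bernoulliChernoffFactor_pow [IsProbabilityMeasure P] {n : ℕ}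
    {X : Fin n → Ω → ℝ} (hm : ∀ i, Measurable (X i)) (hindep : iIndepFun X P)
    (hX : ∀ i ω, X i ω = 0 ∨ X i ω = 1) {μ : ℝ} (hμ : ∀ i, P.real {ω | X i ω = 1} = μ)
    (a : ℝ) {t : ℝ} (ht : 0 ≤ t) :
    P.real {ω | n * a ≤ ∑ i, X i ω} ≤ bernoulliChernoffFactor a μ t ^ n := by
  have hint : Integrable (fun ω => exp (t * (∑ i, X i) ω)) P :=
    hindep.integrable_exp_mul_sum hm fun i _ => integrable_exp_mul_of_bernoulli (hm i) (hX i) t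
  have hmgf : mgf (∑ i, X i) P t = (1 + (exp t - 1) * μ) ^ n := by
    simp [hindep.mgf_sum hm, mgf_of_bernoulli (hm _) (hX _), hμ]
  calc P.real {ω | n * a ≤ ∑ i, X i ω}
      = P.real {ω | n * a ≤ (∑ i, X i) ω} := by simp only [Finset.sum_apply]
    _ ≤ exp (-t * (n * a)) * mgf (∑ i, X i) P t := measure_ge_le_exp_mul_mgf _ ht hint
    _ = bernoulliChernoffFactor a μ t ^ n := by
      rw [hmgf, bernoulliChernoffFactor, mul_pow, ← exp_nat_mul]
      ring_nf

end Bernoulli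

lemma exists_bernoulliChernoffFactor_eq_exp_neg_klBer {a μ : ℝ} (hμ : 0 < μ) (hμa : μ ≤ a)
    (ha : a < 1) : ∃ t, 0 ≤ t ∧ bernoulliChernoffFactor a μ t = exp (-klBer a μ) := by
  have h1a : 0 < 1 - a := by linarith
  have h1μ : 0 < 1 - μ := by linarith
  have ha0 : 0 < a := hμ.trans_le hμa
  refine ⟨log (a * (1 - μ) / ((1 - a) * μ)), log_nonneg ?_, ?_⟩
  · rw [le_div_iff₀ (by positivity)]
    nlinarith
  have hmgf : 1 + (a * (1 - μ) / ((1 - a) * μ) - 1) * μ = (1 - μ) / (1 - a) := by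
    field_simp
    ring
  rw [bernoulliChernoffFactor, exp_log (by positivity), hmgf,
    ← exp_log (by positivity : 0 < (1 - μ) / (1 - a)), ← exp_add, klBer]
  congr 1
  simp only [log_div, log_mul, ha0.ne', hμ.ne', h1a.ne', h1μ.ne', ne_eq, not_false_eq_true,
    mul_ne_zero_iff, and_self]
  ring

lemma tendsto_bernoulliChernoffFactor_one {μ : ℝ} (hμ : 0 < μ) :
    Tendsto (bernoulliChernoffFactor 1 μ) atTop (𝓝 (exp (-klBer 1 μ))) := by
  have hlim : Tendsto (fun t => μ + (1 - μ) * exp (-t)) atTop (𝓝 (μ + (1 - μ) * 0)) :=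
    (tendsto_exp_neg_atTop_nhds_zero.const_mul _).const_add _
  have hfactor : bernoulliChernoffFactor 1 μ = fun t => μ + (1 - μ) * exp (-t) := by
    funext t
    rw [bernoulliChernoffFactor, mul_one, mul_add, mul_one, ← mul_assoc, mul_sub, ← exp_add]
    simp only [neg_add_cancel, exp_zero]
    ring
  simpa [hfactor, klBer, exp_log hμ] using hlim

lemma le_exp_neg_klBer_of_forall_le {a μ b : ℝ} (n : ℕ) (hμ : 0 < μ) (hμa : μ ≤ a) (ha : a ≤ 1)
    (h : ∀ t, 0 ≤ t → b ≤ bernoulliChernoffFactor a μ t ^ n) : b ≤ exp (-n * klBer a μ) := by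
  rw [neg_mul, ← mul_neg, exp_nat_mul]
  rcases ha.lt_or_eq with ha | rfl
  · obtain ⟨t, ht, hopt⟩ := exists_bernoulliChernoffFactor_eq_exp_neg_klBer hμ hμa ha
    exact hopt ▸ h t ht
  · exact ge_of_tendsto ((tendsto_bernoulliChernoffFactor_one hμ).pow n)
      ((eventually_ge_atTop 0).mono h)

/-- Chernoff bound for i.i.d. Bernoulli(μ) random variables:
`P(X̄ ≥ μ + ε) ≤ exp(−n d(μ+ε, μ))`. -/
theorem chernoff_bernoulli (n : ℕ) (hn : 0 < n)
    {Ω : Type*} [MeasurableSpace Ω] (P : Measure Ω) [IsProbabilityMeasure P]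
    (X : Fin n → Ω → ℝ) (hmeas : ∀ i, Measurable (X i))
    (hindep : iIndepFun X P)
    (hval : ∀ i ω, X i ω = 0 ∨ X i ω = 1)
    (μ : ℝ) (hμ : μ ∈ Set.Ioo (0 : ℝ) 1)
    (hber : ∀ i, P {ω | X i ω = 1} = ENNReal.ofReal μ)
    (ε : ℝ) (hε : 0 < ε) (hε1 : μ + ε ≤ 1) :
    P {ω | μ + ε ≤ (∑ i, X i ω) / n} ≤
      ENNReal.ofReal (Real.exp (-(n : ℝ) * klBer (μ + ε) μ)) := by
  have hevent : {ω | μ + ε ≤ (∑ i, X i ω) / n} = {ω | n * (μ + ε) ≤ ∑ i, X i ω} := by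
    ext ω
    simp only [Set.mem_ofPred_eq, le_div_iff₀ (by exact_mod_cast hn : (0 : ℝ) < n), mul_comm]
  have hberReal : ∀ i, P.real {ω | X i ω = 1} = μ := fun i => by
    rw [measureReal_def, hber, ENNReal.toReal_ofReal hμ.1.le]
  rw [hevent, ← ofReal_measureReal]
  exact ENNReal.ofReal_le_ofReal <| le_exp_neg_klBer_of_forall_le n hμ.1 (by linarith) hε1
    fun t ht => measureReal_sum_ge_le_bernoulliChernoffFactor_pow hmeas hindep hval hberReal _ ht
end
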